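/- arXiv:1708.03112 — 2 statements merged into one kernel-verified Lean document; each statement's English description precedes it below -/
import Mathlib

section
/- Let F(x) = Σ_{i=1}^n |Σ_{j=1}^m a_{ij}x_j| and let ‖x‖ = Σ_i d_i|x_i| with all d_i > 0. There exists a finite set W ⊆ {x : ‖x‖ = 1} (of cardinality at most 3^{m+n}) such that for every eigenpair (μ, x) of (F, ‖·‖), there exists y ∈ W with (μ, y) an eigenpair. In particular, the set of eigenvalues of (F, ‖·‖) is finite. -/
/-- The convex subdifferential of `F` at `x` (with the standard dot product on `Fin m → ℝ`). -/
def subgrad {m : ℕ} (F : (Fin m → ℝ) → ℝ) (x : Fin m → ℝ) : Set (Fin m → ℝ) :=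
  {u | ∀ y, (∑ i, u i * (y i - x i)) ≤ F y - F x}

/-- `(μ, x)` is an eigenpair of `(F, N)`: `x ≠ 0` and `0 ∈ ∂F(x) − μ·∂N(x)`. -/
def eigenpair {m : ℕ} (F N : (Fin m → ℝ) → ℝ) (μ : ℝ) (x : Fin m → ℝ) : Prop :=
  x ≠ 0 ∧ ∃ u ∈ subgrad N x, μ • u ∈ subgrad F x

namespace Stmt4Aux

lemma subgrad_iff {m : ℕ} {F : (Fin m → ℝ) → ℝ} (hF0 : F 0 = 0)
    (hF2 : ∀ z, F (fun i => z i + z i) = 2 * F z) (x u : Fin m → ℝ) :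
    u ∈ subgrad F x ↔ (∀ z, ∑ i, u i * z i ≤ F z) ∧ (∑ i, u i * x i) = F x := by
  have key : ∀ z : Fin m → ℝ, ∑ i, u i * (z i - x i) = (∑ i, u i * z i) - ∑ i, u i * x i := by
    intro z; rw [← Finset.sum_sub_distrib]
    exact Finset.sum_congr rfl fun i _ => by ring
  simp only [subgrad, Set.mem_setOf_eq]
  constructor
  · intro h
    have h0 := h 0
    rw [key 0, hF0] at h0
    simp only [Pi.zero_apply, mul_zero, Finset.sum_const_zero] at h0
    have h2 := h (fun i => x i + x i)
    rw [key, hF2] at h2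
    have hxx : (∑ i, u i * (x i + x i)) = 2 * ∑ i, u i * x i := by
      rw [Finset.mul_sum]; exact Finset.sum_congr rfl fun i _ => by ring
    rw [hxx] at h2
    have heq : (∑ i, u i * x i) = F x := by linarith
    refine ⟨fun z => ?_, heq⟩
    have hz := h z
    rw [key] at hz
    linarith
  · rintro ⟨h1, h2⟩ z
    rw [key]
    linarith [h1 z]

lemma sign_coe_mul {s t : ℝ} (h : SignType.sign s = SignType.sign t) :
    ((SignType.sign s : SignType) : ℝ) * t = |t| := by
  rcases lt_trichotomy t 0 with h' | h' | h'
  · rw [h, sign_neg h', abs_of_neg h']; simp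
  · simp [h']
  · rw [h, sign_pos h', abs_of_pos h']; simp

end Stmt4Aux


namespace Stmt4Aux2

open Filter in
lemma Fside {n m : ℕ} (a : Fin n → Fin m → ℝ) {v x y : Fin m → ℝ}
    (hv1 : ∀ z : Fin m → ℝ, ∑ j, v j * z j ≤ ∑ i, |∑ j, a i j * z j|)
    (hv2 : ∑ j, v j * x j = ∑ i, |∑ j, a i j * x j|)
    (hs : ∀ i, SignType.sign (∑ j, a i j * x j) = SignType.sign (∑ j, a i j * y j)) :
    ∑ j, v j * y j = ∑ i, |∑ j, a i j * y j| := by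
  set Ax : Fin n → ℝ := fun i => ∑ j, a i j * x j with hAx
  set Ay : Fin n → ℝ := fun i => ∑ j, a i j * y j with hAy
  set ε : Fin n → ℝ := fun i => ((SignType.sign (Ax i) : SignType) : ℝ) with hε
  have hεx : ∀ i, ε i * Ax i = |Ax i| := fun i => Stmt4Aux.sign_coe_mul rfl
  have hεy : ∀ i, ε i * Ay i = |Ay i| := fun i => Stmt4Aux.sign_coe_mul (hs i)
  -- choose small t > 0
  have hev : ∀ᶠ t in nhdsWithin (0:ℝ) (Set.Ioi 0), ∀ i, Ax i ≠ 0 → t * |Ay i| < |Ax i| := by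
    rw [Filter.eventually_all]
    intro i
    by_cases h : Ax i = 0
    · exact Filter.Eventually.of_forall fun t h' => absurd h h'
    · have hpos : (0:ℝ) < |Ax i| := abs_pos.mpr h
      have htend : Tendsto (fun t : ℝ => t * |Ay i|) (nhdsWithin 0 (Set.Ioi 0)) (nhds 0) := by
        have h1 : Tendsto (fun t : ℝ => t) (nhdsWithin 0 (Set.Ioi 0)) (nhds 0) :=
          tendsto_id.mono_left nhdsWithin_le_nhds
        simpa using h1.mul_const |Ay i|
      exact (htend.eventually_lt_const hpos).mono fun t ht _ => ht
  obtain ⟨t, ht, ht0⟩ := (hev.and self_mem_nhdsWithin).exists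
  -- key per-i identity
  have key : ∀ i, |(1+t) * Ax i - t * Ay i| = (1+t) * |Ax i| - t * |Ay i| := by
    intro i
    rcases eq_or_ne (Ax i) 0 with h | h
    · have hy0 : Ay i = 0 := by
        have h' := hs i
        rw [show (∑ j, a i j * x j) = Ax i from rfl, h] at h'
        simpa [sign_eq_zero_iff] using h'.symm
      simp [h, hy0]
    · have h1 : t * |Ay i| < |Ax i| := ht i h
      have h2 : ε i * ((1+t) * Ax i - t * Ay i) = (1+t) * |Ax i| - t * |Ay i| := by
        linear_combination (1+t) * hεx i - t * hεy i
      have habs : |ε i| = 1 := by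
        rcases lt_trichotomy (Ax i) 0 with h' | h' | h'
        · rw [hε]; simp only; rw [sign_neg h']; norm_num
        · exact absurd h' h
        · rw [hε]; simp only; rw [sign_pos h']; norm_num
      have hnn : 0 ≤ ε i * ((1+t) * Ax i - t * Ay i) := by
        rw [h2]; nlinarith [abs_nonneg (Ax i), abs_nonneg (Ay i)]
      calc |(1+t) * Ax i - t * Ay i| = |ε i| * |(1+t) * Ax i - t * Ay i| := by rw [habs, one_mul]
        _ = |ε i * ((1+t) * Ax i - t * Ay i)| := (abs_mul _ _).symm
        _ = ε i * ((1+t) * Ax i - t * Ay i) := abs_of_nonneg hnn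
        _ = (1+t) * |Ax i| - t * |Ay i| := h2
  have hAw : ∀ i, (∑ j, a i j * ((1+t) * x j - t * y j)) = (1+t) * Ax i - t * Ay i := by
    intro i
    rw [hAx, hAy]; simp only
    rw [Finset.mul_sum, Finset.mul_sum, ← Finset.sum_sub_distrib]
    exact Finset.sum_congr rfl fun j _ => by ring
  have hw := hv1 (fun j => (1+t) * x j - t * y j)
  have hL : (∑ j, v j * ((1+t) * x j - t * y j))
      = (1+t) * (∑ j, v j * x j) - t * (∑ j, v j * y j) := by
    rw [Finset.mul_sum, Finset.mul_sum, ← Finset.sum_sub_distrib]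
    exact Finset.sum_congr rfl fun j _ => by ring
  have hR : (∑ i, |∑ j, a i j * ((1+t) * x j - t * y j)|)
      = (1+t) * (∑ i, |Ax i|) - t * (∑ i, |Ay i|) := by
    rw [Finset.mul_sum, Finset.mul_sum, ← Finset.sum_sub_distrib]
    refine Finset.sum_congr rfl fun i _ => ?_
    rw [hAw i, key i]
  rw [hL, hR, hv2] at hw
  have h4 : (∑ j, v j * y j) ≤ ∑ i, |Ay i| := hv1 y
  have h5 : t * ((∑ i, |Ay i|) - ∑ j, v j * y j) ≤ 0 := by linarith
  nlinarith

end Stmt4Aux2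

namespace Stmt4Main
open Stmt4Aux Stmt4Aux2

section
variable {n m : ℕ} (a : Fin n → Fin m → ℝ) (d : Fin m → ℝ)

lemma hN0 : (∑ i, d i * |(0 : Fin m → ℝ) i|) = 0 := by simp

lemma hN2 : ∀ z : Fin m → ℝ, (∑ i, d i * |z i + z i|) = 2 * ∑ i, d i * |z i| := by
  intro z
  rw [Finset.mul_sum]
  refine Finset.sum_congr rfl fun i _ => ?_
  rw [← two_mul, abs_mul, abs_two]; ring

lemma hF0 : (∑ i, |∑ j, a i j * (0 : Fin m → ℝ) j|) = 0 := by simp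

lemma hF2 : ∀ z : Fin m → ℝ, (∑ i, |∑ j, a i j * (z j + z j)|) = 2 * ∑ i, |∑ j, a i j * z j| := by
  intro z
  rw [Finset.mul_sum]
  refine Finset.sum_congr rfl fun i _ => ?_
  have h : (∑ j, a i j * (z j + z j)) = 2 * ∑ j, a i j * z j := by
    rw [Finset.mul_sum]; exact Finset.sum_congr rfl fun j _ => by ring
  rw [h, abs_mul, abs_two]

lemma transfer (hd : ∀ i, 0 < d i)
    {μ : ℝ} {x y : Fin m → ℝ} (hy : y ≠ 0)
    (hs1 : ∀ i, SignType.sign (∑ j, a i j * x j) = SignType.sign (∑ j, a i j * y j))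
    (hs2 : ∀ j, SignType.sign (x j) = SignType.sign (y j))
    (hx : eigenpair (fun y => ∑ i, |∑ j, a i j * y j|) (fun y => ∑ i, d i * |y i|) μ x) :
    eigenpair (fun y => ∑ i, |∑ j, a i j * y j|) (fun y => ∑ i, d i * |y i|) μ y := by
  obtain ⟨hx0, u, huN, huF⟩ := hx
  rw [subgrad_iff (hN0 d) (hN2 d)] at huN
  rw [subgrad_iff (hF0 a) (hF2 a)] at huF
  obtain ⟨hu1, hu2⟩ := huN
  obtain ⟨hv1, hv2⟩ := huF
  -- bound |u j| ≤ d j via coordinate tests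
  have hb : ∀ (j : Fin m) (c : ℝ), u j * c ≤ d j * |c| := by
    intro j c
    have h := hu1 (fun i => if i = j then c else 0)
    simpa [mul_ite, apply_ite abs, Finset.sum_ite_eq'] using h
  -- termwise equality at x
  have hterm : ∀ j : Fin m, u j * x j = d j * |x j| :=
    fun j => (Finset.sum_eq_sum_iff_of_le (fun j _ => hb j (x j))).mp hu2 j (Finset.mem_univ j)
  -- sign transfer on the norm side
  have htermy : ∀ j : Fin m, u j * y j = d j * |y j| := by
    intro j
    rcases lt_trichotomy (x j) 0 with h' | h' | h'
    · have hyneg : y j < 0 := by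
        have := hs2 j; rw [sign_neg h'] at this
        by_contra hcon
        push_neg at hcon
        rcases eq_or_lt_of_le hcon with h'' | h''
        · rw [← h''] at this; simp at this
        · rw [sign_pos h''] at this; simp at this
      have huj : u j = -(d j) := by
        have h1 : u j * x j = d j * (-(x j)) := by rw [hterm j, abs_of_neg h']
        have := h'.ne
        field_simp at h1
        nlinarith [h1]
      rw [huj, abs_of_neg hyneg]; ring
    · have hy0 : y j = 0 := by
        have := hs2 j; rw [h'] at this; simpa [sign_eq_zero_iff] using this.symm
      simp [hy0]
    · have hypos : 0 < y j := by
        have := hs2 j; rw [sign_pos h'] at this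
        by_contra hcon
        push_neg at hcon
        rcases eq_or_lt_of_le hcon with h'' | h''
        · rw [h''] at this; simp at this
        · rw [sign_neg h''] at this; simp at this
      have huj : u j = d j := by
        have h1 : u j * x j = d j * x j := by rw [hterm j, abs_of_pos h']
        exact mul_right_cancel₀ h'.ne' h1
      rw [huj, abs_of_pos hypos]
  refine ⟨hy, u, ?_, ?_⟩
  · rw [subgrad_iff (hN0 d) (hN2 d)]
    exact ⟨hu1, Finset.sum_congr rfl fun j _ => htermy j⟩
  · rw [subgrad_iff (hF0 a) (hF2 a)]
    exact ⟨hv1, Fside a hv1 hv2 hs1⟩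

end
end Stmt4Main

namespace Stmt4Main
open Stmt4Aux Stmt4Aux2

open Classical in
noncomputable def repPt {n m : ℕ} (a : Fin n → Fin m → ℝ) (d : Fin m → ℝ)
    (p : (Fin n → SignType) × (Fin m → SignType)) : Fin m → ℝ :=
  if h : ∃ y : Fin m → ℝ, (∑ i, d i * |y i| = 1) ∧
      (fun i => SignType.sign (∑ j, a i j * y j), fun j => SignType.sign (y j)) = p
  then h.choose else 0

lemma repPt_spec {n m : ℕ} (a : Fin n → Fin m → ℝ) (d : Fin m → ℝ)
    {p : (Fin n → SignType) × (Fin m → SignType)}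
    (h : ∃ y : Fin m → ℝ, (∑ i, d i * |y i| = 1) ∧
      (fun i => SignType.sign (∑ j, a i j * y j), fun j => SignType.sign (y j)) = p) :
    (∑ i, d i * |repPt a d p i| = 1) ∧
      (fun i => SignType.sign (∑ j, a i j * repPt a d p j),
        fun j => SignType.sign (repPt a d p j)) = p := by
  rw [repPt, dif_pos h]
  exact h.choose_spec

end Stmt4Main


open Stmt4Aux Stmt4Aux2 Stmt4Main in
/-- For `F x = Σᵢ |Σⱼ aᵢⱼ xⱼ|` and `‖x‖ = Σᵢ dᵢ|xᵢ|` (all `dᵢ > 0`) there is a finite set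
`W` of norm-one points, of cardinality at most `3^(m+n)`, such that every eigenvalue of
`(F, ‖·‖)` is realized by an eigenvector in `W`; in particular the set of eigenvalues is
finite. -/
theorem stmt4 {n m : ℕ} (a : Fin n → Fin m → ℝ) (d : Fin m → ℝ) (hd : ∀ i, 0 < d i) :
    (∃ W : Finset (Fin m → ℝ),
      (∀ y ∈ W, ∑ i, d i * |y i| = 1) ∧ W.card ≤ 3 ^ (m + n) ∧
      ∀ (μ : ℝ) (x : Fin m → ℝ),
        eigenpair (fun y => ∑ i, |∑ j, a i j * y j|) (fun y => ∑ i, d i * |y i|) μ x →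
        ∃ y ∈ W,
          eigenpair (fun y => ∑ i, |∑ j, a i j * y j|) (fun y => ∑ i, d i * |y i|) μ y) ∧
    {μ : ℝ | ∃ x : Fin m → ℝ,
      eigenpair (fun y => ∑ i, |∑ j, a i j * y j|) (fun y => ∑ i, d i * |y i|) μ x}.Finite := by
  classical
  have main : ∃ W : Finset (Fin m → ℝ),
      (∀ y ∈ W, ∑ i, d i * |y i| = 1) ∧ W.card ≤ 3 ^ (m + n) ∧
      ∀ (μ : ℝ) (x : Fin m → ℝ),
        eigenpair (fun y => ∑ i, |∑ j, a i j * y j|) (fun y => ∑ i, d i * |y i|) μ x →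
        ∃ y ∈ W,
          eigenpair (fun y => ∑ i, |∑ j, a i j * y j|) (fun y => ∑ i, d i * |y i|) μ y := by
    refine ⟨(Finset.univ.image (repPt a d)).filter (fun y => ∑ i, d i * |y i| = 1),
      ?_, ?_, ?_⟩
    · intro y hy
      exact (Finset.mem_filter.mp hy).2
    · calc ((Finset.univ.image (repPt a d)).filter _).card
          ≤ (Finset.univ.image (repPt a d)).card := Finset.card_filter_le _ _
        _ ≤ (Finset.univ : Finset ((Fin n → SignType) × (Fin m → SignType))).card :=
            Finset.card_image_le
        _ = 3 ^ n * 3 ^ m := by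
            rw [Finset.card_univ]
            have h3 : Fintype.card SignType = 3 := rfl
            simp [Fintype.card_fun, h3]
        _ ≤ 3 ^ (m + n) := by rw [pow_add, Nat.mul_comm]
    · intro μ x hx
      have hx0 : x ≠ 0 := hx.1
      -- Nx > 0
      have hNx : 0 < ∑ i, d i * |x i| := by
        obtain ⟨j, hj⟩ := Function.ne_iff.mp hx0
        refine Finset.sum_pos' (fun i _ => mul_nonneg (hd i).le (abs_nonneg _)) ⟨j, Finset.mem_univ j, ?_⟩
        exact mul_pos (hd j) (abs_pos.mpr hj)
      set c : ℝ := (∑ i, d i * |x i|)⁻¹ with hc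
      have hcpos : 0 < c := inv_pos.mpr hNx
      set x' : Fin m → ℝ := fun j => c * x j with hx'
      have hNx' : ∑ i, d i * |x' i| = 1 := by
        have : ∑ i, d i * |x' i| = c * ∑ i, d i * |x i| := by
          rw [Finset.mul_sum]
          refine Finset.sum_congr rfl fun i _ => ?_
          rw [hx']; simp only
          rw [abs_mul, abs_of_pos hcpos]; ring
        rw [this, hc, inv_mul_cancel₀ hNx.ne']
      have hsp' : (fun i => SignType.sign (∑ j, a i j * x' j), fun j => SignType.sign (x' j))
          = (fun i => SignType.sign (∑ j, a i j * x j), fun j => SignType.sign (x j)) := by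
        refine Prod.ext ?_ ?_ <;> funext i <;> simp only
        · have h1 : (∑ j, a i j * x' j) = c * ∑ j, a i j * x j := by
            rw [Finset.mul_sum]
            refine Finset.sum_congr rfl fun j _ => ?_
            rw [hx']; simp only; ring
          rw [h1, sign_mul, sign_pos hcpos, one_mul]
        · rw [hx']; simp only
          rw [sign_mul, sign_pos hcpos, one_mul]
      set p : (Fin n → SignType) × (Fin m → SignType) :=
        (fun i => SignType.sign (∑ j, a i j * x j), fun j => SignType.sign (x j)) with hp
      have hex : ∃ y : Fin m → ℝ, (∑ i, d i * |y i| = 1) ∧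
          (fun i => SignType.sign (∑ j, a i j * y j), fun j => SignType.sign (y j)) = p :=
        ⟨x', hNx', hsp'⟩
      obtain ⟨hrep1, hrep2⟩ := repPt_spec a d hex
      set y : Fin m → ℝ := repPt a d p with hy
      have hy0 : y ≠ 0 := by
        intro h0
        rw [h0] at hrep1
        simp at hrep1
      refine ⟨y, ?_, ?_⟩
      · rw [Finset.mem_filter]
        exact ⟨Finset.mem_image.mpr ⟨p, Finset.mem_univ p, rfl⟩, hrep1⟩
      · refine transfer a d hd hy0 ?_ ?_ hx
        · intro i
          have := congrFun (congrArg Prod.fst hrep2) i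
          rw [hp] at this
          exact (this).symm
        · intro j
          have := congrFun (congrArg Prod.snd hrep2) j
          rw [hp] at this
          exact (this).symm
  refine ⟨main, ?_⟩
  obtain ⟨W, hW1, _, hW3⟩ := main
  refine Set.Finite.subset (W.finite_toSet.image (fun y => ∑ i, |∑ j, a i j * y j|)) ?_
  rintro μ ⟨x, hx⟩
  obtain ⟨y, hyW, hy⟩ := hW3 μ x hx
  refine ⟨y, hyW, ?_⟩
  obtain ⟨hy0, u, huN, huF⟩ := hy
  rw [subgrad_iff (hN0 d) (hN2 d)] at huN
  rw [subgrad_iff (hF0 a) (hF2 a)] at huF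
  have h1 : ∑ j, u j * y j = 1 := by rw [huN.2]; exact hW1 y hyW
  have h2 := huF.2
  have h3 : (∑ j, (μ • u) j * y j) = μ * ∑ j, u j * y j := by
    rw [Finset.mul_sum]
    exact Finset.sum_congr rfl fun j _ => by simp [mul_assoc]
  rw [h3, h1, mul_one] at h2
  exact h2.symm
end

section
/- Let F(x) = Σ_{i=1}^n |Σ_{j=1}^m a_{ij}x_j| and ‖x‖ = Σ_i d_i|x_i| with d_i > 0. If (μ, x) is an eigenpair of (F, ‖·‖) and y ≠ 0 satisfies Sgn(Σ_j a_{ij}x_j) ⊆ Sgn(Σ_j a_{ij}y_j) for all i and Sgn(x_i) ⊆ Sgn(y_i) for all i, then (μ, y) is also an eigenpair of (F, ‖·‖). -/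
/-- The set-valued sign function. -/
noncomputable def Sgn (t : ℝ) : Set ℝ :=
  if 0 < t then {1} else if t < 0 then {-1} else Set.Icc (-1) 1

lemma Sgn_zero_sub {q : ℝ} (h : Sgn 0 ⊆ Sgn q) : q = 0 := by
  have h1 : (1:ℝ) ∈ Sgn q := h (by simp [Sgn])
  have h2 : (-1:ℝ) ∈ Sgn q := h (by norm_num [Sgn])
  by_contra hq
  rcases lt_or_gt_of_ne hq with h' | h'
  · simp [Sgn, h', asymm h'] at h1; norm_num at h1
  · simp [Sgn, h'] at h2; norm_num at h2

lemma Sgn_pos_sub {p q : ℝ} (hp : 0 < p) (h : Sgn p ⊆ Sgn q) : 0 ≤ q := by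
  have h1 : (1:ℝ) ∈ Sgn q := h (by simp [Sgn, hp])
  by_contra hq
  push_neg at hq
  simp [Sgn, hq, asymm hq] at h1; norm_num at h1

lemma Sgn_neg_sub {p q : ℝ} (hp : p < 0) (h : Sgn p ⊆ Sgn q) : q ≤ 0 := by
  have h1 : (-1:ℝ) ∈ Sgn q := h (by simp [Sgn, hp, asymm hp])
  by_contra hq
  push_neg at hq
  simp [Sgn, hq] at h1; norm_num at h1

lemma abs_sub_eq {p q t : ℝ} (h : Sgn p ⊆ Sgn q) (ht : 0 < t)
    (hle : p ≠ 0 → t * (|q| + 1) ≤ |p|) : |p - t * q| = |p| - t * |q| := by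
  by_cases hp : p = 0
  · have hq := Sgn_zero_sub (hp ▸ h)
    simp [hp, hq]
  · have hb := hle hp
    have htq : t * |q| < |p| := by nlinarith
    rcases lt_trichotomy p 0 with h' | h' | h'
    · have hq : q ≤ 0 := Sgn_neg_sub h' h
      rw [abs_of_nonpos hq] at hb htq ⊢
      rw [abs_of_neg h'] at hb htq ⊢
      rw [abs_of_nonpos (by nlinarith)]
      ring
    · exact absurd h' hp
    · have hq : 0 ≤ q := Sgn_pos_sub h' h
      rw [abs_of_nonneg hq] at hb htq ⊢
      rw [abs_of_pos h'] at hb htq ⊢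
      rw [abs_of_pos (by nlinarith)]

lemma subgrad_trans {m : ℕ} (G : (Fin m → ℝ) → ℝ) (x y : Fin m → ℝ)
    (h2x : G (fun j => 2 * x j) = 2 * G x)
    (hkey : ∃ t, 0 < t ∧ G (fun j => x j - t * y j) ≤ G x - t * G y)
    {u : Fin m → ℝ} (hu : u ∈ subgrad G x) : u ∈ subgrad G y := by
  obtain ⟨t, ht, hG⟩ := hkey
  have hx : ∑ i, u i * x i ≤ G x := by
    have h := hu (fun j => 2 * x j)
    rw [h2x] at h
    calc ∑ i, u i * x i = ∑ i, u i * (2 * x i - x i) := by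
          apply Finset.sum_congr rfl; intro i _; ring
    _ ≤ 2 * G x - G x := h
    _ = G x := by ring
  have hy' : G y ≤ ∑ i, u i * y i := by
    have h := hu (fun j => x j - t * y j)
    have h2 : ∑ i, u i * (x i - t * y i - x i) = -t * ∑ i, u i * y i := by
      rw [Finset.mul_sum]; apply Finset.sum_congr rfl; intro i _; ring
    rw [h2] at h
    have h4 : t * G y ≤ t * ∑ i, u i * y i := by nlinarith
    exact le_of_mul_le_mul_left h4 ht
  intro v
  have h3 := hu v
  have hsplit : ∑ i, u i * (v i - y i)
      = (∑ i, u i * (v i - x i)) + (∑ i, u i * x i) - ∑ i, u i * y i := by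
    rw [← Finset.sum_add_distrib, ← Finset.sum_sub_distrib]
    apply Finset.sum_congr rfl; intro i _; ring
  linarith

lemma G_key {n m : ℕ} (c : Fin n → ℝ) (b : Fin n → Fin m → ℝ) (x y : Fin m → ℝ)
    (hc : ∀ i, 0 ≤ c i)
    (h : ∀ i, Sgn (∑ j, b i j * x j) ⊆ Sgn (∑ j, b i j * y j)) :
    ∃ t, 0 < t ∧ (∑ i, c i * |∑ j, b i j * (x j - t * y j)|)
      ≤ (∑ i, c i * |∑ j, b i j * x j|) - t * ∑ i, c i * |∑ j, b i j * y j| := by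
  set p : Fin n → ℝ := fun i => ∑ j, b i j * x j with hp
  set q : Fin n → ℝ := fun i => ∑ j, b i j * y j with hq
  set f : Fin n → ℝ := fun i => if p i = 0 then 1 else |p i| / (|q i| + 1) with hf
  set S : Finset ℝ := insert 1 (Finset.univ.image f) with hS
  have hSne : S.Nonempty := ⟨1, Finset.mem_insert_self _ _⟩
  set t : ℝ := S.min' hSne with htdef
  have hfpos : ∀ i, 0 < f i := by
    intro i
    simp only [hf]
    split
    · norm_num
    · next h' => exact div_pos (abs_pos.mpr h') (by positivity)
  have ht : 0 < t := by
    rw [htdef, Finset.lt_min'_iff]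
    intro s hs
    rcases Finset.mem_insert.mp hs with rfl | hs
    · norm_num
    · obtain ⟨i, _, rfl⟩ := Finset.mem_image.mp hs
      exact hfpos i
  have htle : ∀ i, t ≤ f i := fun i =>
    Finset.min'_le _ _ (Finset.mem_insert_of_mem (Finset.mem_image_of_mem f (Finset.mem_univ i)))
  refine ⟨t, ht, ?_⟩
  have habs : ∀ i, |p i - t * q i| = |p i| - t * |q i| := by
    intro i
    refine abs_sub_eq (h i) ht ?_
    intro hpi
    have h1 := htle i
    rw [hf] at h1
    simp only [hpi, if_false] at h1
    exact (le_div_iff₀ (by positivity)).mp h1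
  have hsum : ∀ i, ∑ j, b i j * (x j - t * y j) = p i - t * q i := by
    intro i
    rw [hp, hq]
    simp only [Finset.mul_sum, ← Finset.sum_sub_distrib]
    apply Finset.sum_congr rfl
    intro j _
    ring
  calc (∑ i, c i * |∑ j, b i j * (x j - t * y j)|)
      = ∑ i, (c i * |p i| - t * (c i * |q i|)) := by
        apply Finset.sum_congr rfl
        intro i _
        rw [hsum i, habs i]; ring
    _ = (∑ i, c i * |p i|) - t * ∑ i, c i * |q i| := by
        rw [Finset.sum_sub_distrib, Finset.mul_sum]
    _ ≤ (∑ i, c i * |∑ j, b i j * x j|) - t * ∑ i, c i * |∑ j, b i j * y j| := le_rfl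

/-- If `(μ, x)` is an eigenpair of `(F, ‖·‖)` and `y ≠ 0` satisfies the sign-inclusion
conditions, then `(μ, y)` is also an eigenpair. -/
theorem stmt5 {n m : ℕ} (a : Fin n → Fin m → ℝ) (d : Fin m → ℝ) (hd : ∀ i, 0 < d i)
    (μ : ℝ) (x y : Fin m → ℝ)
    (hx : eigenpair (fun v => ∑ i, |∑ j, a i j * v j|) (fun v => ∑ i, d i * |v i|) μ x)
    (hy : y ≠ 0)
    (h1 : ∀ i, Sgn (∑ j, a i j * x j) ⊆ Sgn (∑ j, a i j * y j))
    (h2 : ∀ i, Sgn (x i) ⊆ Sgn (y i)) :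
    eigenpair (fun v => ∑ i, |∑ j, a i j * v j|) (fun v => ∑ i, d i * |v i|) μ y := by
  obtain ⟨hx0, u, huN, huF⟩ := hx
  refine ⟨hy, u, ?_, ?_⟩
  · -- u ∈ subgrad N y
    apply subgrad_trans _ x y _ _ huN
    · rw [Finset.mul_sum]
      apply Finset.sum_congr rfl
      intro i _
      rw [abs_mul, abs_two]
      ring
    · obtain ⟨t, ht, hle⟩ := G_key d (fun i j => if j = i then (1:ℝ) else 0) x y
        (fun i => (hd i).le) (by intro i; simpa using h2 i)
      refine ⟨t, ht, ?_⟩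
      simpa using hle
  · -- μ • u ∈ subgrad F y
    apply subgrad_trans _ x y _ _ huF
    · rw [Finset.mul_sum]
      apply Finset.sum_congr rfl
      intro i _
      have hs : (∑ j, a i j * (2 * x j)) = 2 * ∑ j, a i j * x j := by
        rw [Finset.mul_sum]
        apply Finset.sum_congr rfl
        intro j _
        ring
      rw [hs, abs_mul, abs_two]
    · obtain ⟨t, ht, hle⟩ := G_key (fun _ => (1:ℝ)) a x y (fun _ => zero_le_one) h1
      refine ⟨t, ht, ?_⟩
      simpa using hle
end
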